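/- arXiv:0705.0760 — 4 statements merged into one kernel-verified Lean document; each statement's English description precedes it below -/
import Mathlib

section
/- Let G be a graph with nonnegative edge weights, M* a matching, and z : V → ℝ≥0 such that w_{ij} = z_i + z_j for all (i,j) ∈ M* and w_{ij} ≤ z_i + z_j − ε for all (i,j) ∉ M*, for some ε > 0. Let P be a path whose edges alternate between M* and its complement, whose internal structure stays in G, and whose endpoints are both saturated by P ∩ M*. Then w(P ∩ M*) ≥ w(P \ M*) + ε·|P \ M*|; in particular, if P contains at least one non-M* edge, then w(P ∩ M*) > w(P \ M*). -/
/-- `M` is a matching in `G`: a set of edges of `G`, no two of which share a vertex. -/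
def IsMatching {V : Type*} (G : SimpleGraph V) (M : Finset (Sym2 V)) : Prop :=
  (↑M : Set (Sym2 V)) ⊆ G.edgeSet ∧
    ∀ e ∈ M, ∀ f ∈ M, e ≠ f → ∀ v : V, v ∈ e → v ∉ f

/-- A list of edges alternates with respect to `M`: of any two consecutive entries,
exactly one lies in `M`. -/
def AltList {V : Type*} [DecidableEq V] (M : Finset (Sym2 V)) (l : List (Sym2 V)) : Prop :=
  ∀ i : ℕ, (h : i + 1 < l.length) →
    ((l[i]'(Nat.lt_of_succ_lt h)) ∈ M ↔ (l[i+1]'h) ∉ M)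

/-- Total weight of a list of edges. -/
def wsum {V : Type*} (w : Sym2 V → ℝ) (l : List (Sym2 V)) : ℝ := (l.map w).sum

lemma wsum_cons {V : Type*} (w : Sym2 V → ℝ) (e : Sym2 V) (l : List (Sym2 V)) :
    wsum w (e :: l) = w e + wsum w l := by simp [wsum]

lemma aux_bound {V : Type*} [DecidableEq V] (G : SimpleGraph V)
    (w : Sym2 V → ℝ)
    (Mstar : Finset (Sym2 V))
    (z : V → ℝ) (hz : ∀ i, 0 ≤ z i) (ε : ℝ)
    (heq : ∀ i j : V, s(i, j) ∈ Mstar → w s(i, j) = z i + z j)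
    (hle : ∀ i j : V, G.Adj i j → s(i, j) ∉ Mstar → w s(i, j) ≤ z i + z j - ε) :
    ∀ n : ℕ, ∀ {a b : V} (P : G.Walk a b), P.length ≤ n → AltList Mstar P.edges →
    (∀ e, P.edges.head? = some e → e ∈ Mstar) →
    (∀ e, P.edges.getLast? = some e → e ∈ Mstar) →
    P.edges ≠ [] →
    wsum w (P.edges.filter (· ∈ Mstar)) ≥
      wsum w (P.edges.filter (· ∉ Mstar)) +
        ε * (P.edges.filter (· ∉ Mstar)).length + z a + z b := by
  intro n
  induction n with
  | zero =>
    intro a b P hlen _ _ _ hne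
    have h1 := SimpleGraph.Walk.length_edges P
    exact absurd (List.eq_nil_of_length_eq_zero (by omega)) hne
  | succ n ih =>
    intro a b P hlen halt hfirst hlast hne
    cases P with
    | nil => simp at hne
    | @cons _ c _ h Q =>
      have he0 : s(a, c) ∈ Mstar := hfirst _ (by simp)
      cases Q with
      | nil =>
        simp only [SimpleGraph.Walk.edges_cons, SimpleGraph.Walk.edges_nil]
        rw [List.filter_cons, List.filter_cons]
        simp [he0, wsum, heq a b he0]
      | @cons _ d _ h' R =>
        -- edges: s(a,c) :: s(c,d) :: R.edges
        have he1 : s(c, d) ∉ Mstar := by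
          have := halt 0 (by simp)
          simpa using this.mp (by simpa using he0)
        have hRne : R.edges ≠ [] := by
          intro hnil
          exact he1 (hlast s(c, d) (by simp [SimpleGraph.Walk.edges_cons, hnil]))
        have hlenE : 2 + R.edges.length
            = (SimpleGraph.Walk.cons h (SimpleGraph.Walk.cons h' R)).edges.length := by
          simp [SimpleGraph.Walk.edges_cons]; ring
        have he2 : ∀ e, R.edges.head? = some e → e ∈ Mstar := by
          intro e hhead
          cases hR : R.edges with
          | nil => simp [hR] at hhead
          | cons e2 tl =>
            rw [hR] at hhead
            simp at hhead
            subst hhead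
            have hlt : 1 + 1 < (SimpleGraph.Walk.cons h (SimpleGraph.Walk.cons h' R)).edges.length := by
              rw [← hlenE, hR]; simp
            have halt1 := halt 1 hlt
            have hget : ((SimpleGraph.Walk.cons h (SimpleGraph.Walk.cons h' R)).edges[2]'hlt) = e2 := by
              simp [SimpleGraph.Walk.edges_cons, hR]
            have hget1 : ((SimpleGraph.Walk.cons h (SimpleGraph.Walk.cons h' R)).edges[1]'(Nat.lt_of_succ_lt hlt)) = s(c,d) := by
              simp [SimpleGraph.Walk.edges_cons]
            rw [hget1, hget] at halt1
            by_contra hcon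
            exact he1 (halt1.mpr hcon)
        have haltR : AltList Mstar R.edges := by
          intro i hi
          have hlt : (i + 2) + 1 < (SimpleGraph.Walk.cons h (SimpleGraph.Walk.cons h' R)).edges.length := by
            omega
          have := halt (i + 2) hlt
          simpa [SimpleGraph.Walk.edges_cons] using this
        have hlastR : ∀ e, R.edges.getLast? = some e → e ∈ Mstar := by
          intro e hE
          apply hlast
          simp only [SimpleGraph.Walk.edges_cons]
          rw [List.getLast?_cons_cons]
          cases hR : R.edges with
          | nil => exact absurd hR hRne
          | cons e2 tl => rw [List.getLast?_cons_cons, ← hR]; exact hE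
        have hlenR : R.length ≤ n := by
          have : (SimpleGraph.Walk.cons h (SimpleGraph.Walk.cons h' R)).length = R.length + 2 := by
            simp [SimpleGraph.Walk.length_cons]
          omega
        have IH := ih R hlenR haltR he2 hlastR hRne
        have hw0 : w s(a, c) = z a + z c := heq a c he0
        have hw1 : w s(c, d) ≤ z c + z d - ε := hle c d h' he1
        simp only [SimpleGraph.Walk.edges_cons]
        rw [List.filter_cons_of_pos (by simp [he0]), List.filter_cons_of_neg (by simp [he1]),
          List.filter_cons_of_neg (by simp [he0]), List.filter_cons_of_pos (by simp [he1]),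
          wsum_cons, wsum_cons, List.length_cons]
        push_cast
        have hring : ε * (((R.edges.filter (· ∉ Mstar)).length : ℝ) + 1)
            = ε * ((R.edges.filter (· ∉ Mstar)).length : ℝ) + ε := by ring
        linarith [IH]

/-- Suppose the weights and the dual values `z ≥ 0` satisfy the strict
complementary slackness conditions with slack `ε > 0`: `w e = z i + z j` for
`e = (i,j) ∈ M*`, and `w (i,j) ≤ z i + z j - ε` for edges `(i,j) ∉ M*`.  Let `P` be an
alternating path (with respect to `M*`) in `G` whose first and last edges are both in
`M*` (both endpoints saturated by `P ∩ M*`).  Then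
`w(P ∩ M*) ≥ w(P \ M*) + ε·|P \ M*|`; in particular, if `P` contains at least one
non-`M*` edge, then `w(P ∩ M*) > w(P \ M*)`. -/
theorem alternating_path_weight_bound {V : Type*} [DecidableEq V] (G : SimpleGraph V)
    (w : Sym2 V → ℝ) (hw : ∀ e, 0 ≤ w e)
    (Mstar : Finset (Sym2 V)) (hM : IsMatching G Mstar)
    (z : V → ℝ) (hz : ∀ i, 0 ≤ z i) (ε : ℝ) (hε : 0 < ε)
    (heq : ∀ i j : V, s(i, j) ∈ Mstar → w s(i, j) = z i + z j)
    (hle : ∀ i j : V, G.Adj i j → s(i, j) ∉ Mstar → w s(i, j) ≤ z i + z j - ε)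
    {a b : V} (P : G.Walk a b) (hP : P.IsPath) (halt : AltList Mstar P.edges)
    (hfirst : ∀ e, P.edges.head? = some e → e ∈ Mstar)
    (hlast : ∀ e, P.edges.getLast? = some e → e ∈ Mstar) :
    wsum w (P.edges.filter (· ∈ Mstar)) ≥
        wsum w (P.edges.filter (· ∉ Mstar)) +
          ε * (P.edges.filter (· ∉ Mstar)).length ∧
      ((P.edges.filter (· ∉ Mstar)) ≠ [] →
        wsum w (P.edges.filter (· ∈ Mstar)) > wsum w (P.edges.filter (· ∉ Mstar))) := by
  by_cases hne : P.edges = []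
  · simp [hne, wsum]
  · have key := aux_bound G w Mstar z hz ε heq hle P.length P le_rfl halt hfirst hlast hne
    constructor
    · have := hz a; have := hz b; linarith
    · intro hfne
      have hpos : 0 < ((P.edges.filter (· ∉ Mstar)).length : ℝ) := by
        have : 0 < (P.edges.filter (· ∉ Mstar)).length := List.length_pos_iff.mpr hfne
        exact_mod_cast this
      have := hz a; have := hz b
      nlinarith
end

section
/- Let x be an optimal solution to the matching LP relaxation on a weighted graph G with unique maximum weight matching M*, and suppose the LP optimum is unique. Let G' be the subgraph of G consisting of edges e with e ∈ M* or x_e > 0. Then G' contains no cycle augmentation: no even cycle in G' has every alternate edge in M*. -/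
open Finset

/-- Total weight of a matching. -/
def mWeight {V : Type*} (w : Sym2 V → ℝ) (M : Finset (Sym2 V)) : ℝ := ∑ e ∈ M, w e

/-- Feasibility for the matching LP relaxation. -/
def LPFeasible {V : Type*} [Fintype V] [DecidableEq V] (G : SimpleGraph V)
    [DecidableRel G.Adj] (x : Sym2 V → ℝ) : Prop :=
  (∀ e, 0 ≤ x e) ∧ (∀ e, e ∉ G.edgeSet → x e = 0) ∧
    ∀ i : V, ∑ e ∈ G.edgeFinset.filter (fun e => i ∈ e), x e ≤ 1

/-- The LP objective value. -/
def LPval {V : Type*} [Fintype V] [DecidableEq V] (G : SimpleGraph V)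
    [DecidableRel G.Adj] (w x : Sym2 V → ℝ) : ℝ :=
  ∑ e ∈ G.edgeFinset, w e * x e

lemma aux_getElem_congr {α : Type*} (l : List α) {i j : ℕ} (h : i = j) (hj : j < l.length) :
    l[i]'(by omega) = l[j] := by subst h; rfl

lemma aux_edges_getElem {V : Type*} {G : SimpleGraph V} {u v : V} (p : G.Walk u v) :
    ∀ (i : ℕ) (h : i < p.edges.length),
      p.edges[i] = s(p.getVert i, p.getVert (i+1)) := by
  induction p with
  | nil => intro i h; simp at h
  | cons hadj q ih =>
    intro i h
    cases i with
    | zero => simp [SimpleGraph.Walk.getVert_cons_succ]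
    | succ m =>
      simp only [SimpleGraph.Walk.edges_cons, List.getElem_cons_succ,
        SimpleGraph.Walk.getVert_cons_succ]
      exact ih m (by simpa using h)

lemma aux_support_getElem {V : Type*} {G : SimpleGraph V} {u v : V} (p : G.Walk u v) :
    ∀ (i : ℕ) (h : i < p.support.length), p.support[i] = p.getVert i := by
  induction p with
  | nil =>
    intro i h
    have hi : i = 0 := by simpa using h
    subst hi; simp
  | cons hadj q ih =>
    intro i h
    cases i with
    | zero => simp
    | succ m =>
      simp only [SimpleGraph.Walk.support_cons, List.getElem_cons_succ,
        SimpleGraph.Walk.getVert_cons_succ]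
      exact ih m (by simpa using h)

lemma aux_getVert_inj {V : Type*} {G : SimpleGraph V} {a : V} {C : G.Walk a a}
    (hC : C.IsCycle) {i j : ℕ} (hi : i < C.length) (hj : j < C.length)
    (hij : C.getVert i = C.getVert j) : i = j := by
  have hlsup : C.support.length = C.length + 1 := C.length_support
  have hlt : C.support.tail.length = C.length := by simp [hlsup]
  have tget : ∀ k (hk : k < C.length), C.support.tail[k]'(by omega) = C.getVert (k+1) := by
    intro k hk
    rw [List.getElem_tail, aux_support_getElem]
  have hnd := hC.support_nodup
  have key : ∀ k l (hk : k < C.length) (hl : l < C.length),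
      C.getVert (k+1) = C.getVert (l+1) → k = l := by
    intro k l hk hl h
    have e1 := tget k hk
    have e2 := tget l hl
    have heq : C.support.tail[k]'(by omega) = C.support.tail[l]'(by omega) := by
      rw [e1, e2, h]
    exact (List.Nodup.getElem_inj_iff hnd).mp heq
  have h3 := hC.three_le_length
  rcases Nat.eq_zero_or_pos i with hi0 | hip
  · rcases Nat.eq_zero_or_pos j with hj0 | hjp
    · omega
    · exfalso
      have : C.getVert ((C.length - 1) + 1) = C.getVert ((j-1)+1) := by
        have : C.length - 1 + 1 = C.length := by omega
        rw [this, SimpleGraph.Walk.getVert_length]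
        have : (j - 1) + 1 = j := by omega
        rw [this, ← hij, hi0, SimpleGraph.Walk.getVert_zero]
      have := key _ _ (by omega) (by omega) this
      omega
  · rcases Nat.eq_zero_or_pos j with hj0 | hjp
    · exfalso
      have : C.getVert ((C.length - 1) + 1) = C.getVert ((i-1)+1) := by
        have h1 : C.length - 1 + 1 = C.length := by omega
        rw [h1, SimpleGraph.Walk.getVert_length]
        have : (i - 1) + 1 = i := by omega
        rw [this, hij, hj0, SimpleGraph.Walk.getVert_zero]
      have := key _ _ (by omega) (by omega) this
      omega
    · have : C.getVert ((i-1)+1) = C.getVert ((j-1)+1) := by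
        have h1 : (i - 1) + 1 = i := by omega
        have h2 : (j - 1) + 1 = j := by omega
        rw [h1, h2]; exact hij
      have := key _ _ (by omega) (by omega) this
      omega

lemma aux_alt_parity {V : Type*} [DecidableEq V] (M : Finset (Sym2 V)) (l : List (Sym2 V))
    (hA : ∀ i : ℕ, (h : i + 1 < l.length) →
      ((l[i]'(Nat.lt_of_succ_lt h)) ∈ M ↔ (l[i+1]'h) ∉ M)) (h0 : 0 < l.length) :
    ∀ i (h : i < l.length), (l[i] ∈ M ↔ ((l[0]'h0) ∈ M ↔ Even i)) := by
  intro i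
  induction i with
  | zero => intro h; simp
  | succ k ih =>
    intro h
    have hk := ih (Nat.lt_of_succ_lt h)
    have halt := hA k h
    rw [Nat.even_add_one]
    tauto

lemma aux_incidence {V : Type*} [DecidableEq V] {G : SimpleGraph V} (Mstar : Finset (Sym2 V))
    (a : V) (C : G.Walk a a) (hC : C.IsCycle) (hEven : Even C.length)
    (hAlt : ∀ i : ℕ, (h : i + 1 < C.edges.length) →
      ((C.edges[i]'(Nat.lt_of_succ_lt h)) ∈ Mstar ↔ (C.edges[i+1]'h) ∉ Mstar)) :
    ∀ v : V, (C.edges.toFinset.filter (fun e => v ∈ e)) = ∅ ∨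
    ∃ e f, e ∈ C.edges.toFinset ∧ f ∈ C.edges.toFinset ∧ e ≠ f ∧ (e ∈ Mstar ↔ f ∉ Mstar) ∧
      C.edges.toFinset.filter (fun e => v ∈ e) = {e, f} := by
  intro v
  set n := C.length with hn
  have hn3 : 3 ≤ n := hC.three_le_length
  have hEl : C.edges.length = n := C.length_edges
  have hnodup : C.edges.Nodup := hC.edges_nodup
  have hmem : ∀ {i : ℕ} (h : i < n) {u : V}, u ∈ C.edges[i]'(by omega) ↔
      (u = C.getVert i ∨ u = C.getVert (i+1)) := by
    intro i h u
    rw [aux_edges_getElem C i (by omega)]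
    simp [Sym2.mem_iff]
  by_cases hv : ∃ k, k < n ∧ C.getVert k = v
  · right
    obtain ⟨k, hk, hkv⟩ := hv
    set i₁ : ℕ := if k = 0 then n - 1 else k - 1 with hi₁
    have hi₁lt : i₁ < n := by simp only [hi₁]; split <;> omega
    have hi₁ne : i₁ ≠ k := by simp only [hi₁]; split <;> omega
    have hi₁0 : k = 0 → i₁ = n - 1 := fun h => by simp [hi₁, h]
    have hi₁p : k ≠ 0 → i₁ = k - 1 := fun h => by simp [hi₁, h]
    -- characterization
    have hchar : ∀ i (h : i < n), (v ∈ C.edges[i]'(by omega)) ↔ (i = i₁ ∨ i = k) := by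
      intro i h
      rw [hmem h]
      constructor
      · rintro (h1 | h2)
        · right; exact aux_getVert_inj hC h hk (by rw [← h1, hkv])
        · by_cases hin : i + 1 < n
          · have hik : i + 1 = k := aux_getVert_inj hC hin hk (by rw [← h2, hkv])
            left; rw [hi₁p (by omega)]; omega
          · have hin' : i + 1 = n := by omega
            have hgv : C.getVert (i+1) = C.getVert 0 := by
              rw [hin', SimpleGraph.Walk.getVert_length, SimpleGraph.Walk.getVert_zero]
            have hk0 : (0 : ℕ) = k := aux_getVert_inj hC (by omega) hk (by rw [← hgv, ← h2, hkv])
            left; rw [hi₁0 hk0.symm]; omega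
      · rintro (h1 | h2)
        · by_cases hk0 : k = 0
          · have hie : i = n - 1 := by rw [h1, hi₁0 hk0]
            right
            have hii : i + 1 = n := by omega
            rw [hii, SimpleGraph.Walk.getVert_length, ← hkv, hk0,
              SimpleGraph.Walk.getVert_zero]
          · have hie : i = k - 1 := by rw [h1, hi₁p hk0]
            right
            have hii : i + 1 = k := by omega
            rw [hii, hkv]
        · subst h2; left; exact hkv.symm
    refine ⟨C.edges[i₁]'(by omega), C.edges[k]'(by omega), ?_, ?_, ?_, ?_, ?_⟩
    · exact List.mem_toFinset.mpr (List.getElem_mem _)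
    · exact List.mem_toFinset.mpr (List.getElem_mem _)
    · intro hEq
      exact hi₁ne ((List.Nodup.getElem_inj_iff hnodup).mp hEq)
    · -- alternation
      by_cases hk0 : k = 0
      · have hpar := aux_alt_parity Mstar C.edges hAlt (by omega) (n-1) (by omega)
        have hodd : ¬ Even (n - 1) := by
          rcases hEven with ⟨m, hm⟩
          rintro ⟨p, hp⟩
          omega
        have h0 : (C.edges[0]'(by omega)) ∈ Mstar ↔ ((C.edges[0]'(by omega)) ∈ Mstar ↔ Even 0) := aux_alt_parity Mstar C.edges hAlt (by omega) 0 (by omega)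
        have he1 : C.edges[i₁]'(by omega) = C.edges[n-1]'(by omega) :=
          aux_getElem_congr _ (by rw [hi₁0 hk0]) (by omega)
        have he2 : C.edges[k]'(by omega) = C.edges[0]'(by omega) :=
          aux_getElem_congr _ hk0 (by omega)
        rw [he1, he2, hpar]
        exact ⟨fun h1 h2 => hodd (h1.mp h2),
          fun hne => ⟨fun he => absurd he hne, fun hev => absurd hev hodd⟩⟩
      · have halt := hAlt (k-1) (by omega)
        have he1 : C.edges[i₁]'(by omega) = C.edges[k-1]'(by omega) :=
          aux_getElem_congr _ (hi₁p hk0) (by omega)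
        have he2 : C.edges[k]'(by omega) = C.edges[(k-1)+1]'(by omega) :=
          aux_getElem_congr _ (by omega) (by omega)
        rw [he1, he2]; exact halt
    · ext g
      simp only [Finset.mem_filter, List.mem_toFinset, Finset.mem_insert,
        Finset.mem_singleton]
      constructor
      · rintro ⟨hg, hvg⟩
        obtain ⟨i, hi, hgi⟩ := List.mem_iff_getElem.mp hg
        have hi' : i < n := by omega
        have := (hchar i hi').mp (by rw [hgi]; exact hvg)
        rcases this with h1 | h2
        · left; rw [← hgi]; exact aux_getElem_congr _ h1 (by omega)
        · right; rw [← hgi]; exact aux_getElem_congr _ h2 (by omega)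
      · rintro (h1 | h2)
        · subst h1
          exact ⟨List.getElem_mem _, (hchar i₁ hi₁lt).mpr (Or.inl rfl)⟩
        · subst h2
          exact ⟨List.getElem_mem _, (hchar k hk).mpr (Or.inr rfl)⟩
  · left
    rw [Finset.filter_eq_empty_iff]
    intro g hg hvg
    obtain ⟨i, hi, hgi⟩ := List.mem_iff_getElem.mp (List.mem_toFinset.mp hg)
    have hi' : i < n := by omega
    rcases (hmem hi').mp (by rw [hgi]; exact hvg) with h1 | h2
    · exact hv ⟨i, hi', h1.symm⟩
    · by_cases hin : i + 1 < n
      · exact hv ⟨i+1, hin, h2.symm⟩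
      · have hin' : i + 1 = n := by omega
        refine hv ⟨0, by omega, ?_⟩
        rw [SimpleGraph.Walk.getVert_zero, h2, hin', SimpleGraph.Walk.getVert_length]

/-- Let `x` be the unique optimal solution to the matching LP
relaxation, and `M*` the unique maximum weight matching.  Then the support subgraph
`G' = {e : e ∈ M* or x e > 0}` contains no cycle augmentation: no even cycle of `G`
all of whose edges lie in `G'` has its edges alternating with respect to `M*`. -/
theorem no_cycle_augmentation {V : Type*} [Fintype V] [DecidableEq V]
    (G : SimpleGraph V) [DecidableRel G.Adj] (w : Sym2 V → ℝ)
    (Mstar : Finset (Sym2 V)) (hM : IsMatching G Mstar)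
    (hMuniq : ∀ M : Finset (Sym2 V), IsMatching G M → M ≠ Mstar →
      mWeight w M < mWeight w Mstar)
    (x : Sym2 V → ℝ) (hx : LPFeasible G x)
    (hxuniq : ∀ y, LPFeasible G y → y ≠ x → LPval G w y < LPval G w x) :
    ∀ (a : V) (C : G.Walk a a), C.IsCycle → Even C.length →
      (∀ e ∈ C.edges, e ∈ Mstar ∨ 0 < x e) → ¬ AltList Mstar C.edges := by
  intro a C hC hEven hsupp hAlt
  classical
  have key := aux_incidence Mstar a C hC hEven hAlt
  set S : Finset (Sym2 V) := C.edges.toFinset with hSdef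
  have hSsub : S ⊆ G.edgeFinset := fun e he =>
    (SimpleGraph.mem_edgeFinset).mpr (C.edges_subset_edgeSet (List.mem_toFinset.mp he))
  set A : Finset (Sym2 V) := S.filter (fun e => e ∈ Mstar) with hAdef
  set B : Finset (Sym2 V) := S.filter (fun e => e ∉ Mstar) with hBdef
  have hABdisj : Disjoint A B := by
    rw [Finset.disjoint_left]
    intro e heA heB
    exact (Finset.mem_filter.mp heB).2 (Finset.mem_filter.mp heA).2
  have hABU : A ∪ B = S := by
    ext g
    simp only [hAdef, hBdef, Finset.mem_union, Finset.mem_filter]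
    tauto
  have hBne : B.Nonempty := by
    have h3 := hC.three_le_length
    have hEl : C.edges.length = C.length := C.length_edges
    have halt := hAlt 0 (by omega)
    by_cases h0 : C.edges[0]'(by omega) ∈ Mstar
    · exact ⟨C.edges[1]'(by omega),
        Finset.mem_filter.mpr ⟨List.mem_toFinset.mpr (List.getElem_mem _), halt.mp h0⟩⟩
    · exact ⟨C.edges[0]'(by omega),
        Finset.mem_filter.mpr ⟨List.mem_toFinset.mpr (List.getElem_mem _), h0⟩⟩
  have hBpos : ∀ e ∈ B, 0 < x e := by
    intro e he
    rcases Finset.mem_filter.mp he with ⟨heS, heM⟩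
    rcases hsupp e (List.mem_toFinset.mp heS) with h | h
    · exact absurd h heM
    · exact h
  set δ : ℝ := ∑ e ∈ A, w e - ∑ e ∈ B, w e with hδdef
  rcases le_or_gt δ 0 with hδ | hδ
  · -- matching side: M* Δ C has weight ≥ M*
    set M' : Finset (Sym2 V) := (Mstar \ S) ∪ B with hM'def
    have hM'sub : ∀ e ∈ M', e ∈ Mstar ∨ e ∈ B := by
      intro e he
      rcases Finset.mem_union.mp he with h | h
      · exact Or.inl (Finset.mem_sdiff.mp h).1
      · exact Or.inr h
    have hScases : ∀ e ∈ M', e ∈ S → e ∈ B := by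
      intro e he heS
      rcases Finset.mem_union.mp he with h | h
      · exact absurd heS (Finset.mem_sdiff.mp h).2
      · exact h
    have hcore : ∀ e ∈ M', ∀ f ∈ M', e ∈ S → e ≠ f → ∀ v : V, v ∈ e → v ∈ f → False := by
      intro e he f hf heS hef v hve hvf
      have heB : e ∈ B := hScases e he heS
      have heM : e ∉ Mstar := (Finset.mem_filter.mp heB).2
      rcases key v with h | ⟨g1, g2, hg1S, hg2S, hg12, hgalt, hgeq⟩
      · have : e ∈ S.filter (fun g => v ∈ g) := Finset.mem_filter.mpr ⟨heS, hve⟩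
        rw [h] at this
        simp at this
      have heP : e = g1 ∨ e = g2 := by
        have : e ∈ ({g1, g2} : Finset (Sym2 V)) := by
          rw [← hgeq]; exact Finset.mem_filter.mpr ⟨heS, hve⟩
        simpa using this
      by_cases hfS : f ∈ S
      · have hfB : f ∈ B := hScases f hf hfS
        have hfM : f ∉ Mstar := (Finset.mem_filter.mp hfB).2
        have hfP : f = g1 ∨ f = g2 := by
          have : f ∈ ({g1, g2} : Finset (Sym2 V)) := by
            rw [← hgeq]; exact Finset.mem_filter.mpr ⟨hfS, hvf⟩
          simpa using this
        rcases heP with rfl | rfl <;> rcases hfP with rfl | rfl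
        · exact hef rfl
        · exact heM (hgalt.mpr hfM)
        · exact hfM (hgalt.mpr heM)
        · exact hef rfl
      · have hfMstar : f ∈ Mstar := by
          rcases hM'sub f hf with h | h
          · exact h
          · exact absurd (Finset.mem_filter.mp h).1 hfS
        rcases heP with rfl | rfl
        · -- partner is g2
          have hg2M : g2 ∈ Mstar := not_not.mp (fun h => heM (hgalt.mpr h))
          have hg2f : g2 ∈ S.filter (fun g => v ∈ g) := by rw [hgeq]; simp
          rcases Finset.mem_filter.mp hg2f with ⟨hg2S', hvg2⟩
          have hg2ne : g2 ≠ f := fun h => hfS (h ▸ hg2S')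
          exact hM.2 g2 hg2M f hfMstar hg2ne v hvg2 hvf
        · -- partner is g1
          have hg1M : g1 ∈ Mstar := hgalt.mpr heM
          have hg1f : g1 ∈ S.filter (fun g => v ∈ g) := by rw [hgeq]; simp
          rcases Finset.mem_filter.mp hg1f with ⟨hg1S', hvg1⟩
          have hg1ne : g1 ≠ f := fun h => hfS (h ▸ hg1S')
          exact hM.2 g1 hg1M f hfMstar hg1ne v hvg1 hvf
    have hM'match : IsMatching G M' := by
      constructor
      · intro e he
        rcases hM'sub e (Finset.mem_coe.mp he) with h | h
        · exact hM.1 (Finset.mem_coe.mpr h)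
        · exact (SimpleGraph.mem_edgeFinset).mp (hSsub (Finset.mem_filter.mp h).1)
      · intro e he f hf hef v hve hvf
        by_cases heS : e ∈ S
        · exact hcore e he f hf heS hef v hve hvf
        · by_cases hfS : f ∈ S
          · exact hcore f hf e he hfS (Ne.symm hef) v hvf hve
          · have heM : e ∈ Mstar := by
              rcases hM'sub e he with h | h
              · exact h
              · exact absurd (Finset.mem_filter.mp h).1 heS
            have hfM : f ∈ Mstar := by
              rcases hM'sub f hf with h | h
              · exact h
              · exact absurd (Finset.mem_filter.mp h).1 hfS
            exact hM.2 e heM f hfM hef v hve hvf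
    obtain ⟨b, hb⟩ := hBne
    have hbM : b ∉ Mstar := (Finset.mem_filter.mp hb).2
    have hbM' : b ∈ M' := Finset.mem_union_right _ hb
    have hneM : M' ≠ Mstar := fun h => hbM (h ▸ hbM')
    have hlt := hMuniq M' hM'match hneM
    have hdisj1 : Disjoint (Mstar \ S) B := by
      rw [Finset.disjoint_left]
      intro g hg1 hg2
      exact (Finset.mem_sdiff.mp hg1).2 (Finset.mem_filter.mp hg2).1
    have hw1 : mWeight w M' = (∑ e ∈ Mstar \ S, w e) + ∑ e ∈ B, w e := by
      rw [hM'def, mWeight, Finset.sum_union hdisj1]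
    have hw2 : mWeight w Mstar = (∑ e ∈ Mstar \ S, w e) + ∑ e ∈ A, w e := by
      have hAeq : Mstar ∩ S = A := by
        ext g
        simp only [hAdef, Finset.mem_inter, Finset.mem_filter]
        tauto
      have hsum := Finset.sum_union (Finset.disjoint_sdiff_inter Mstar S) (f := w)
      rw [Finset.sdiff_union_inter] at hsum
      rw [mWeight, hsum, hAeq]
    have hδ' : (∑ e ∈ A, w e) - ∑ e ∈ B, w e ≤ 0 := hδ
    rw [hw1, hw2] at hlt
    linarith
  · -- LP side: perturb x
    set ε : ℝ := B.inf' hBne x with hεdef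
    have hε : 0 < ε := (Finset.lt_inf'_iff hBne).mpr hBpos
    set d : Sym2 V → ℝ := fun e => if e ∈ A then ε else if e ∈ B then -ε else 0 with hddef
    set y : Sym2 V → ℝ := fun e => x e + d e with hydef
    have hdA : ∀ e ∈ A, d e = ε := by
      intro e he
      simp only [hddef, if_pos he]
    have hdB : ∀ e ∈ B, d e = -ε := by
      intro e he
      have hne : e ∉ A := Finset.disjoint_right.mp hABdisj he
      simp only [hddef, if_neg hne, if_pos he]
    have hd0 : ∀ e, e ∉ S → d e = 0 := by
      intro e he
      have h1 : e ∉ A := fun h => he (Finset.mem_filter.mp h).1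
      have h2 : e ∉ B := fun h => he (Finset.mem_filter.mp h).1
      simp only [hddef, if_neg h1, if_neg h2]
    have hyfeas : LPFeasible G y := by
      refine ⟨?_, ?_, ?_⟩
      · intro e
        have hx0 := hx.1 e
        show 0 ≤ x e + d e
        by_cases heA : e ∈ A
        · rw [hdA e heA]; linarith
        · by_cases heB : e ∈ B
          · rw [hdB e heB]
            have hεle : ε ≤ x e := Finset.inf'_le x heB
            linarith
          · have : d e = 0 := by simp only [hddef, if_neg heA, if_neg heB]
            rw [this]; linarith
      · intro e he
        have hxe := hx.2.1 e he
        have heS : e ∉ S := fun h => he ((SimpleGraph.mem_edgeFinset).mp (hSsub h))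
        show x e + d e = 0
        rw [hd0 e heS, hxe]; ring
      · intro v
        have hxv := hx.2.2 v
        have hsplit : ∑ e ∈ G.edgeFinset.filter (fun e => v ∈ e), y e
            = (∑ e ∈ G.edgeFinset.filter (fun e => v ∈ e), x e)
              + ∑ e ∈ G.edgeFinset.filter (fun e => v ∈ e), d e := by
          rw [← Finset.sum_add_distrib]
        have hdsum : ∑ e ∈ G.edgeFinset.filter (fun e => v ∈ e), d e = 0 := by
          have hrestrict :
              ∑ e ∈ (G.edgeFinset.filter (fun e => v ∈ e)).filter (fun e => e ∈ S), d e
              = ∑ e ∈ G.edgeFinset.filter (fun e => v ∈ e), d e :=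
            Finset.sum_filter_of_ne (fun e _ hde => by
              by_contra h
              exact hde (hd0 e h))
          have hset : (G.edgeFinset.filter (fun e => v ∈ e)).filter (fun e => e ∈ S)
              = S.filter (fun e => v ∈ e) := by
            ext g
            simp only [Finset.mem_filter]
            constructor
            · rintro ⟨⟨_, h2⟩, h3⟩; exact ⟨h3, h2⟩
            · rintro ⟨h1, h2⟩; exact ⟨⟨hSsub h1, h2⟩, h1⟩
          rw [← hrestrict, hset]
          rcases key v with h | ⟨e, f, heS, hfS, hef, halt, heq⟩
          · rw [h]; simp
          · rw [heq, Finset.sum_pair hef]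
            by_cases heM : e ∈ Mstar
            · have heA : e ∈ A := Finset.mem_filter.mpr ⟨heS, heM⟩
              have hfB : f ∈ B := Finset.mem_filter.mpr ⟨hfS, halt.mp heM⟩
              rw [hdA e heA, hdB f hfB]; ring
            · have heB : e ∈ B := Finset.mem_filter.mpr ⟨heS, heM⟩
              have hfA : f ∈ A :=
                Finset.mem_filter.mpr ⟨hfS, not_not.mp (fun h => heM (halt.mpr h))⟩
              rw [hdB e heB, hdA f hfA]; ring
        rw [hsplit, hdsum]
        linarith
    obtain ⟨b, hb⟩ := hBne
    have hyx : y ≠ x := by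
      intro h
      have h1 : y b = x b := congrFun h b
      have h2 : x b + d b = x b := h1
      rw [hdB b hb] at h2
      linarith
    have hval : LPval G w y = LPval G w x + ε * δ := by
      rw [LPval, LPval]
      have hcongr : ∀ e ∈ G.edgeFinset, w e * y e = w e * x e + w e * d e := by
        intro e _
        show w e * (x e + d e) = _
        ring
      rw [Finset.sum_congr rfl hcongr, Finset.sum_add_distrib]
      congr 1
      have h1 : ∑ e ∈ G.edgeFinset, w e * d e = ∑ e ∈ S, w e * d e :=
        (Finset.sum_subset hSsub (fun e _ he => by rw [hd0 e he]; ring)).symm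
      have h2 : ∑ e ∈ A, w e * d e = (∑ e ∈ A, w e) * ε := by
        rw [Finset.sum_congr rfl (fun e he => by rw [hdA e he]), ← Finset.sum_mul]
      have h3 : ∑ e ∈ B, w e * d e = (∑ e ∈ B, w e) * (-ε) := by
        rw [Finset.sum_congr rfl (fun e he => by rw [hdB e he]), ← Finset.sum_mul]
      rw [h1, ← hABU, Finset.sum_union hABdisj, h2, h3, hδdef]
      ring
    have hcontra := hxuniq y hyfeas hyx
    rw [hval] at hcontra
    nlinarith [mul_pos hε hδ]
end

section
/- Let x be the unique optimal solution to the matching LP relaxation on a weighted graph G with unique maximum weight matching M*. Let G' be the subgraph with edge set {e : e ∈ M* or x_e > 0}. Then G' contains no path augmentation: no path in G' alternates between M* and E\M* while beginning and ending at vertices unsaturated by M*. -/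
open Finset

lemma walk_edges_getElem {V : Type*} {G : SimpleGraph V} {u v : V} (p : G.Walk u v) :
    ∀ (i : ℕ) (hi : i < p.length),
      p.edges[i]'(by simpa using hi) = s(p.getVert i, p.getVert (i+1)) := by
  induction p with
  | nil => intro i hi; simp at hi
  | cons h q ih =>
    intro i hi
    cases i with
    | zero =>
      simp [SimpleGraph.Walk.edges_cons, SimpleGraph.Walk.getVert_zero,
        SimpleGraph.Walk.getVert_cons_succ]
    | succ i =>
      have h2 := ih i (by simpa using hi)
      simp [SimpleGraph.Walk.edges_cons, SimpleGraph.Walk.getVert_cons_succ, h2]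

lemma walk_support_getElem {V : Type*} {G : SimpleGraph V} {u v : V} (p : G.Walk u v) :
    ∀ (i : ℕ) (hi : i ≤ p.length),
      p.support[i]'(by simp [SimpleGraph.Walk.length_support]; omega) = p.getVert i := by
  induction p with
  | nil => intro i hi; simp at hi; subst hi; simp [SimpleGraph.Walk.getVert_zero]
  | cons h q ih =>
    intro i hi
    cases i with
    | zero => simp [SimpleGraph.Walk.getVert_zero]
    | succ i =>
      have h2 := ih i (by simpa using hi)
      simp [SimpleGraph.Walk.support_cons, SimpleGraph.Walk.getVert_cons_succ, h2]

lemma walk_getVert_inj {V : Type*} {G : SimpleGraph V} {u v : V} {p : G.Walk u v}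
    (hp : p.IsPath) {i k : ℕ} (hi : i ≤ p.length) (hk : k ≤ p.length)
    (h : p.getVert i = p.getVert k) : i = k := by
  have hnd := hp.support_nodup
  have h1 := walk_support_getElem p i hi
  have h2 := walk_support_getElem p k hk
  have : p.support[i]'(by simp [SimpleGraph.Walk.length_support]; omega)
      = p.support[k]'(by simp [SimpleGraph.Walk.length_support]; omega) := by rw [h1, h2, h]
  exact (hnd.getElem_inj_iff).mp this

/-- Let `x` be the unique optimal solution to the matching LP
relaxation, and `M*` the unique maximum weight matching.  Then the support subgraph
`G' = {e : e ∈ M* or x e > 0}` contains no path augmentation: no nontrivial path of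
`G` all of whose edges lie in `G'` alternates with respect to `M*` while beginning
and ending at vertices unsaturated by `M*`. -/
theorem no_path_augmentation {V : Type*} [Fintype V] [DecidableEq V]
    (G : SimpleGraph V) [DecidableRel G.Adj] (w : Sym2 V → ℝ)
    (Mstar : Finset (Sym2 V)) (hM : IsMatching G Mstar)
    (hMuniq : ∀ M : Finset (Sym2 V), IsMatching G M → M ≠ Mstar →
      mWeight w M < mWeight w Mstar)
    (x : Sym2 V → ℝ) (hx : LPFeasible G x)
    (hxuniq : ∀ y, LPFeasible G y → y ≠ x → LPval G w y < LPval G w x) :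
    ∀ (a b : V) (P : G.Walk a b), P.IsPath → 0 < P.length →
      (∀ e ∈ P.edges, e ∈ Mstar ∨ 0 < x e) →
      (∀ e ∈ Mstar, a ∉ e) → (∀ e ∈ Mstar, b ∉ e) → ¬ AltList Mstar P.edges := by
  classical
  intro a b P hP hlen hsupp ha hb halt
  set n := P.length with hn
  have hel : P.edges.length = n := P.length_edges
  set E : ℕ → Sym2 V := fun i => if h : i < P.edges.length then P.edges[i] else s(a,a) with hEdef
  have hEi : ∀ (i : ℕ) (hi : i < n), E i = P.edges[i]'(by rw [hel]; exact hi) := by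
    intro i hi
    simp only [hEdef]
    rw [dif_pos (show i < P.edges.length by rw [hel]; exact hi)]
  have hEs : ∀ (i : ℕ), i < n → E i = s(P.getVert i, P.getVert (i+1)) := by
    intro i hi
    rw [hEi i hi, walk_edges_getElem P i hi]
  -- membership in edges
  have hmemS : ∀ e, e ∈ P.edges ↔ ∃ i, ∃ _ : i < n, E i = e := by
    intro e
    rw [List.mem_iff_getElem]
    constructor
    · rintro ⟨i, hi, rfl⟩
      exact ⟨i, by rw [hel] at hi; exact hi, (hEi i (by rw [hel] at hi; exact hi))⟩
    · rintro ⟨i, hi, rfl⟩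
      exact ⟨i, by rw [hel]; exact hi, (hEi i hi).symm⟩
  -- injectivity of E
  have hEinj : ∀ i k, i < n → k < n → E i = E k → i = k := by
    intro i k hi hk h
    have hnd : P.edges.Nodup := hP.isTrail.edges_nodup
    rw [hEi i hi, hEi k hk] at h
    exact hnd.getElem_inj_iff.mp h
  -- vertex membership in edge i
  have hvE : ∀ i, i < n → ∀ v : V, v ∈ E i ↔ P.getVert i = v ∨ P.getVert (i+1) = v := by
    intro i hi v
    rw [hEs i hi, Sym2.mem_iff]
    constructor <;> rintro (h | h) <;> simp [h]
  -- parity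
  have hpar : ∀ i, i < n → (E i ∈ Mstar ↔ Odd i) := by
    intro i
    induction i with
    | zero =>
      intro hi
      have hav : a ∈ E 0 := by
        rw [hvE 0 hi a]; left; exact P.getVert_zero
      constructor
      · intro h; exact absurd hav (ha _ h)
      · intro h; exact absurd h (by decide)
    | succ i ih =>
      intro hi
      have hi' : i < n := Nat.lt_of_succ_lt hi
      have hA : E i ∈ Mstar ↔ E (i+1) ∉ Mstar := by
        rw [hEi i hi', hEi (i+1) hi]
        exact halt i (by rw [hel]; exact hi)
      have hB := ih hi'
      rw [Nat.odd_add_one]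
      tauto
  -- n is odd
  have hbv : b ∈ E (n-1) := by
    rw [hvE (n-1) (by omega) b]
    right
    have : n - 1 + 1 = n := by omega
    rw [this, hn, P.getVert_length]
  have hnodd : Odd n := by
    have h1 : ¬ Odd (n - 1) := fun h => hb _ ((hpar _ (by omega)).mpr h) hbv
    rw [Nat.odd_iff] at *
    omega
  -- the support finsets
  set S : Finset (Sym2 V) := P.edges.toFinset with hSdef
  have hmemS' : ∀ e, e ∈ S ↔ ∃ i, ∃ _ : i < n, E i = e := by
    intro e; rw [hSdef, List.mem_toFinset]; exact hmemS e
  set oddS : Finset (Sym2 V) := S.filter (· ∈ Mstar) with hoddDef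
  set evenS : Finset (Sym2 V) := S.filter (· ∉ Mstar) with hevenDef
  have hSsub : S ⊆ G.edgeFinset := by
    intro e he
    rw [SimpleGraph.mem_edgeFinset]
    exact P.edges_subset_edgeSet (by rw [hSdef, List.mem_toFinset] at he; exact he)
  -- incidence structure
  have hinc : ∀ v : V,
      S.filter (fun e => v ∈ e) = ∅
    ∨ (∃ e, S.filter (fun e => v ∈ e) = {e} ∧ e ∉ Mstar ∧ ∀ g ∈ Mstar, v ∉ g)
    ∨ (∃ e f, e ≠ f ∧ S.filter (fun e => v ∈ e) = {e, f} ∧ e ∈ Mstar ∧ f ∉ Mstar) := by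
    intro v
    by_cases hv : v ∈ P.support
    · obtain ⟨j, hjv, hjn⟩ := SimpleGraph.Walk.mem_support_iff_exists_getVert.mp hv
      have hmemf : ∀ e, e ∈ S.filter (fun e => v ∈ e) ↔
          ∃ i, i < n ∧ E i = e ∧ (i = j ∨ i + 1 = j) := by
        intro e
        rw [Finset.mem_filter, hmemS' e]
        constructor
        · rintro ⟨⟨i, hi, rfl⟩, hve⟩
          refine ⟨i, hi, rfl, ?_⟩
          rcases (hvE i hi v).mp hve with h | h
          · left; exact walk_getVert_inj hP (by omega) hjn (h.trans hjv.symm)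
          · right; exact walk_getVert_inj hP (by omega) hjn (h.trans hjv.symm)
        · rintro ⟨i, hi, rfl, hij⟩
          refine ⟨⟨i, hi, rfl⟩, ?_⟩
          rw [hvE i hi v]
          rcases hij with rfl | h
          · left; exact hjv
          · right; rw [h]; exact hjv
      by_cases hj0 : j = 0
      · subst hj0
        refine Or.inr (Or.inl ⟨E 0, ?_, ?_, ?_⟩)
        · ext e
          rw [hmemf e, Finset.mem_singleton]
          constructor
          · rintro ⟨i, hi, rfl, hij⟩
            have : i = 0 := by omega
            subst this; rfl
          · rintro rfl
            exact ⟨0, hlen, rfl, Or.inl rfl⟩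
        · intro h
          have := (hpar 0 hlen).mp h
          exact (by decide : ¬ Odd 0) this
        · intro g hg hvg
          have hva : v = a := by rw [← hjv, P.getVert_zero]
          exact ha g hg (hva ▸ hvg)
      · by_cases hjn' : j = n
        · subst hjn'
          refine Or.inr (Or.inl ⟨E (n-1), ?_, ?_, ?_⟩)
          · ext e
            rw [hmemf e, Finset.mem_singleton]
            constructor
            · rintro ⟨i, hi, rfl, hij⟩
              have : i = n - 1 := by omega
              subst this; rfl
            · rintro rfl
              exact ⟨n - 1, by omega, rfl, Or.inr (by omega)⟩
          · intro h
            have := (hpar (n-1) (by omega)).mp h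
            rw [Nat.odd_iff] at this hnodd; omega
          · intro g hg hvg
            have hvb : v = b := by rw [← hjv, hn, P.getVert_length]
            exact hb g hg (hvb ▸ hvg)
        · -- interior vertex
          have hj1 : 1 ≤ j := by omega
          have hjltn : j < n := by omega
          have hpair : S.filter (fun e => v ∈ e) = {E (j-1), E j} := by
            ext e
            rw [hmemf e, Finset.mem_insert, Finset.mem_singleton]
            constructor
            · rintro ⟨i, hi, rfl, hij⟩
              rcases hij with rfl | h
              · right; rfl
              · left; rw [show i = j - 1 by omega]
            · rintro (rfl | rfl)
              · exact ⟨j - 1, by omega, rfl, Or.inr (by omega)⟩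
              · exact ⟨j, hjltn, rfl, Or.inl rfl⟩
          have hne' : E (j-1) ≠ E j := by
            intro h
            have := hEinj (j-1) j (by omega) hjltn h
            omega
          by_cases hoj : Odd j
          · refine Or.inr (Or.inr ⟨E j, E (j-1), hne'.symm, ?_, ?_, ?_⟩)
            · rw [hpair]; ext e; simp [Finset.mem_insert]; tauto
            · exact (hpar j hjltn).mpr hoj
            · intro h
              have := (hpar (j-1) (by omega)).mp h
              rw [Nat.odd_iff] at this hoj; omega
          · refine Or.inr (Or.inr ⟨E (j-1), E j, hne', hpair, ?_, ?_⟩)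
            · refine (hpar (j-1) (by omega)).mpr ?_
              rw [Nat.odd_iff] at hoj ⊢; omega
            · intro h
              exact hoj ((hpar j hjltn).mp h)
    · left
      rw [Finset.eq_empty_iff_forall_notMem]
      intro e he
      rw [Finset.mem_filter] at he
      obtain ⟨heS, hve⟩ := he
      rw [hSdef, List.mem_toFinset] at heS
      induction e using Sym2.ind with
      | _ c d =>
        rcases Sym2.mem_iff.mp hve with rfl | rfl
        · exact hv (P.fst_mem_support_of_mem_edges heS)
        · exact hv (P.snd_mem_support_of_mem_edges heS)
  -- the swapped matching
  set M' : Finset (Sym2 V) := (Mstar \ S) ∪ evenS with hM'def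
  have hE0S : E 0 ∈ S := (hmemS' _).mpr ⟨0, hlen, rfl⟩
  have hE0notM : E 0 ∉ Mstar := fun h => (by decide : ¬ Odd 0) ((hpar 0 hlen).mp h)
  have hE0even : E 0 ∈ evenS := by rw [hevenDef, Finset.mem_filter]; exact ⟨hE0S, hE0notM⟩
  have hM'match : IsMatching G M' := by
    constructor
    · intro e he
      rw [hM'def] at he
      simp only [Finset.coe_union, Set.mem_union, Finset.coe_sdiff, Set.mem_diff,
        Finset.mem_coe] at he
      rcases he with ⟨heM, _⟩ | he
      · exact hM.1 heM
      · rw [hevenDef, Finset.mem_filter] at he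
        exact SimpleGraph.mem_edgeFinset.mp (hSsub he.1)
    · intro e he f hf hef v hve hvf
      rw [hM'def, Finset.mem_union, Finset.mem_sdiff] at he hf
      have hfilt : ∀ g, g ∈ evenS → v ∈ g → g ∈ S.filter (fun e => v ∈ e) := by
        intro g hg hvg
        rw [hevenDef, Finset.mem_filter] at hg
        rw [Finset.mem_filter]
        exact ⟨hg.1, hvg⟩
      have hevenNotM : ∀ g, g ∈ evenS → g ∉ Mstar := by
        intro g hg; rw [hevenDef, Finset.mem_filter] at hg; exact hg.2
      have mixed : ∀ (e' f' : Sym2 V), e' ∈ Mstar ∧ e' ∉ S → f' ∈ evenS →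
          v ∈ e' → v ∈ f' → False := by
        intro e' f' he' hf' hve' hvf'
        rcases hinc v with hc | ⟨g, hg, hgM, hunsat⟩ | ⟨g, h', hgh, hgeq, hgM, hhM⟩
        · have := hfilt f' hf' hvf'; rw [hc] at this; exact absurd this (Finset.notMem_empty _)
        · exact hunsat e' he'.1 hve'
        · have hgin : g ∈ S.filter (fun e => v ∈ e) := by
            rw [hgeq]; exact Finset.mem_insert_self _ _
          rw [Finset.mem_filter] at hgin
          by_cases hge : e' = g
          · exact he'.2 (hge ▸ hgin.1)
          · exact hM.2 e' he'.1 g hgM hge v hve' hgin.2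
      rcases he with he | he
      · rcases hf with hf | hf
        · exact hM.2 e he.1 f hf.1 hef v hve hvf
        · exact mixed e f he hf hve hvf
      · rcases hf with hf | hf
        · exact mixed f e hf he hvf hve
        · -- both in evenS
          have h1 := hfilt e he hve
          have h2 := hfilt f hf hvf
          rcases hinc v with hc | ⟨g, hg, hgM, _⟩ | ⟨g, h', hgh, hgeq, hgM, hhM⟩
          · rw [hc] at h1; exact absurd h1 (Finset.notMem_empty _)
          · rw [hg, Finset.mem_singleton] at h1 h2
            exact hef (h1.trans h2.symm)
          · rw [hgeq, Finset.mem_insert, Finset.mem_singleton] at h1 h2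
            have he1 : e = h' := by
              rcases h1 with rfl | rfl
              · exact absurd hgM (hevenNotM e he)
              · rfl
            have hf1 : f = h' := by
              rcases h2 with rfl | rfl
              · exact absurd hgM (hevenNotM f hf)
              · rfl
            exact hef (he1.trans hf1.symm)
  -- weight comparison for matchings
  have hM'ne : M' ≠ Mstar := by
    intro h
    have : E 0 ∈ M' := by
      rw [hM'def, Finset.mem_union]; exact Or.inr hE0even
    rw [h] at this
    exact hE0notM this
  have hdisj1 : Disjoint (Mstar \ S) evenS := by
    rw [Finset.disjoint_left]
    intro g hg hg'
    rw [Finset.mem_sdiff] at hg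
    rw [hevenDef, Finset.mem_filter] at hg'
    exact hg.2 hg'.1
  have hwM' : mWeight w M' = (∑ e ∈ Mstar \ S, w e) + ∑ e ∈ evenS, w e := by
    rw [hM'def]; exact Finset.sum_union hdisj1
  have hwM : mWeight w Mstar = (∑ e ∈ Mstar \ S, w e) + ∑ e ∈ oddS, w e := by
    have hsub : oddS ⊆ Mstar := by
      intro g hg; rw [hoddDef, Finset.mem_filter] at hg; exact hg.2
    have heq : Mstar \ oddS = Mstar \ S := by
      ext g
      rw [Finset.mem_sdiff, Finset.mem_sdiff, hoddDef, Finset.mem_filter]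
      tauto
    have := Finset.sum_sdiff (f := w) hsub
    rw [heq] at this
    rw [mWeight, ← this]
  have hlt1 : (∑ e ∈ evenS, w e) < ∑ e ∈ oddS, w e := by
    have := hMuniq M' hM'match hM'ne
    rw [hwM', hwM] at this
    linarith
  -- epsilon
  have hevne : (evenS.image x).Nonempty := ⟨x (E 0), Finset.mem_image_of_mem x hE0even⟩
  set ε : ℝ := (evenS.image x).min' hevne with hεdef
  have hεx : ∀ e ∈ evenS, ε ≤ x e := fun e he =>
    Finset.min'_le _ _ (Finset.mem_image_of_mem x he)
  have hεpos : 0 < ε := by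
    obtain ⟨e, he, hxe⟩ := Finset.mem_image.mp (Finset.min'_mem (evenS.image x) hevne)
    rw [hεdef, ← hxe]
    have heS : e ∈ S := by rw [hevenDef, Finset.mem_filter] at he; exact he.1
    have heM : e ∉ Mstar := by rw [hevenDef, Finset.mem_filter] at he; exact he.2
    rcases hsupp e (by rw [hSdef, List.mem_toFinset] at heS; exact heS) with h | h
    · exact absurd h heM
    · exact h
  -- the perturbed LP solution
  set y : Sym2 V → ℝ := fun e => if e ∈ oddS then x e + ε else if e ∈ evenS then x e - ε
    else x e with hydef
  have hoddM : ∀ e ∈ oddS, e ∈ Mstar := by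
    intro g hg; rw [hoddDef, Finset.mem_filter] at hg; exact hg.2
  have hevenM : ∀ e ∈ evenS, e ∉ Mstar := by
    intro g hg; rw [hevenDef, Finset.mem_filter] at hg; exact hg.2
  have hyodd : ∀ e ∈ oddS, y e = x e + ε := by
    intro e he; rw [hydef]; simp only [if_pos he]
  have hyeven : ∀ e ∈ evenS, y e = x e - ε := by
    intro e he
    have : e ∉ oddS := fun h => hevenM e he (hoddM e h)
    rw [hydef]; simp only [if_neg this, if_pos he]
  have hynot : ∀ e, e ∉ S → y e = x e := by
    intro e he
    have h1 : e ∉ oddS := fun h => he (Finset.mem_of_mem_filter e h)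
    have h2 : e ∉ evenS := fun h => he (Finset.mem_of_mem_filter e h)
    rw [hydef]; simp only [if_neg h1, if_neg h2]
  have hyfeas : LPFeasible G y := by
    refine ⟨?_, ?_, ?_⟩
    · intro e
      by_cases h1 : e ∈ oddS
      · rw [hyodd e h1]; have := hx.1 e; linarith
      · by_cases h2 : e ∈ evenS
        · rw [hyeven e h2]; have := hεx e h2; linarith
        · rw [hydef]; simp only [if_neg h1, if_neg h2]; exact hx.1 e
    · intro e he
      have heS : e ∉ S := fun h => he (SimpleGraph.mem_edgeFinset.mp (hSsub h))
      rw [hynot e heS]; exact hx.2.1 e he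
    · intro v
      have hsubf : S.filter (fun e => v ∈ e) ⊆ G.edgeFinset.filter (fun e => v ∈ e) :=
        Finset.filter_subset_filter _ hSsub
      have hkey : ∑ e ∈ G.edgeFinset.filter (fun e => v ∈ e), (y e - x e) ≤ 0 := by
        rw [← Finset.sum_subset hsubf (by
          intro e he hne
          have : e ∉ S := by
            intro hS
            exact hne (Finset.mem_filter.mpr ⟨hS, (Finset.mem_filter.mp he).2⟩)
          rw [hynot e this]; ring)]
        rcases hinc v with hc | ⟨e, he, heM, _⟩ | ⟨e, f, hef, heq, heM, hfM⟩
        · rw [hc]; simp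
        · rw [he, Finset.sum_singleton]
          have heS : e ∈ S := by
            have : e ∈ S.filter (fun e => v ∈ e) := by rw [he]; exact Finset.mem_singleton_self e
            exact Finset.mem_of_mem_filter e this
          have : e ∈ evenS := by rw [hevenDef, Finset.mem_filter]; exact ⟨heS, heM⟩
          rw [hyeven e this]; linarith
        · rw [heq, Finset.sum_insert (by simpa using hef), Finset.sum_singleton]
          have heS : e ∈ S := by
            have : e ∈ S.filter (fun e => v ∈ e) := by
              rw [heq]; exact Finset.mem_insert_self _ _
            exact Finset.mem_of_mem_filter e this
          have hfS : f ∈ S := by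
            have : f ∈ S.filter (fun e => v ∈ e) := by
              rw [heq]; exact Finset.mem_insert_of_mem (Finset.mem_singleton_self f)
            exact Finset.mem_of_mem_filter f this
          have h1 : e ∈ oddS := by rw [hoddDef, Finset.mem_filter]; exact ⟨heS, heM⟩
          have h2 : f ∈ evenS := by rw [hevenDef, Finset.mem_filter]; exact ⟨hfS, hfM⟩
          rw [hyodd e h1, hyeven f h2]; ring_nf; exact le_refl 0
      have hsum : ∑ e ∈ G.edgeFinset.filter (fun e => v ∈ e), y e
          = (∑ e ∈ G.edgeFinset.filter (fun e => v ∈ e), x e)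
            + ∑ e ∈ G.edgeFinset.filter (fun e => v ∈ e), (y e - x e) := by
        rw [← Finset.sum_add_distrib]; apply Finset.sum_congr rfl; intros; ring
      have := hx.2.2 v
      rw [hsum]; linarith
  have hyne : y ≠ x := by
    intro h
    have := congrFun h (E 0)
    rw [hyeven (E 0) hE0even] at this
    linarith
  have hlt2 := hxuniq y hyfeas hyne
  -- compute LPval difference
  have hval : LPval G w y - LPval G w x
      = ε * ((∑ e ∈ oddS, w e) - ∑ e ∈ evenS, w e) := by
    rw [LPval, LPval, ← Finset.sum_sub_distrib]
    have h1 : ∀ e ∈ G.edgeFinset, w e * y e - w e * x e = w e * (y e - x e) := by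
      intros; ring
    rw [Finset.sum_congr rfl h1]
    rw [← Finset.sum_subset hSsub (by
      intro e _ heS
      rw [hynot e heS]; ring)]
    have hpart : S = oddS ∪ evenS := by
      ext g
      rw [Finset.mem_union, hoddDef, hevenDef, Finset.mem_filter, Finset.mem_filter]
      tauto
    have hdisj2 : Disjoint oddS evenS := by
      rw [Finset.disjoint_left]
      intro g hg hg'
      exact hevenM g hg' (hoddM g hg)
    rw [hpart, Finset.sum_union hdisj2]
    have h2 : ∀ e ∈ oddS, w e * (y e - x e) = ε * w e := by
      intro e he; rw [hyodd e he]; ring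
    have h3 : ∀ e ∈ evenS, w e * (y e - x e) = -(ε * w e) := by
      intro e he; rw [hyeven e he]; ring
    rw [Finset.sum_congr rfl h2, Finset.sum_congr rfl h3]
    rw [← Finset.mul_sum, Finset.sum_neg_distrib, ← Finset.mul_sum]
    ring
  have hlt3 : (∑ e ∈ oddS, w e) - (∑ e ∈ evenS, w e) < 0 := by
    by_contra hcon
    push_neg at hcon
    have : 0 ≤ ε * ((∑ e ∈ oddS, w e) - ∑ e ∈ evenS, w e) :=
      mul_nonneg (le_of_lt hεpos) hcon
    rw [← hval] at this
    linarith
  linarith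
end

section
/- Let G be a graph with edge weights, M a matching, and suppose (C₁, C₂, P) is a bad blossom pair with respect to M. Then M is not a maximum weight fractional matching; more precisely, the fractional point obtained from the indicator vector of M by adding ε on edges of (C₁ ∪ C₂) \ M, subtracting ε on edges of (C₁ ∪ C₂) ∩ M, adding 2ε on P \ M and subtracting 2ε on P ∩ M (for small ε > 0) is feasible for the matching LP and has strictly larger weight than M. -/
/-!
The perturbed point is `1_M + ε d`, where `d` is `∓1` on the blossom edges and `∓2` on the
edges of `P` (minus on `M`). At every vertex the entries of `d` sum to zero: an inner vertex of
a blossom or of `P` meets exactly one edge of `M` and one edge outside `M` on it (for a blossom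
of length `2k + 1` because its `k` matching edges are disjoint and avoid the base, so they cover
the other `2k` vertices), while a base meets two non-matching blossom edges and the matching end
edge of `P`. So every degree constraint keeps its value `|M ∩ δ(v)| ≤ 1`, all entries stay
nonnegative for `ε ≤ 1/3`, and the objective grows by `ε` times the badness gap.
-/


open Finset

/-- A blossom with respect to `M`, rooted at its base `b`: an odd cycle `C` with
`(|C| - 1)/2` edges in `M`, whose base `b` is saturated by no edge of `C ∩ M`. -/
def IsBlossom {V : Type*} [DecidableEq V] (G : SimpleGraph V) (M : Finset (Sym2 V))
    {b : V} (C : G.Walk b b) : Prop :=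
  C.IsCycle ∧ Odd C.length ∧ 2 * (C.edges.filter (· ∈ M)).length + 1 = C.length ∧
    ∀ e ∈ C.edges, e ∈ M → b ∉ e

/-- A stemmed blossom with respect to `M`: a blossom `C` with base `b` together with
an alternating path `P` (the stem) starting at `b` with an edge of `M`, such that
`M - (P ∩ M) + (P \ M)` is still a matching. -/
def IsStemmedBlossom {V : Type*} [DecidableEq V] (G : SimpleGraph V)
    (M : Finset (Sym2 V)) {b t : V} (C : G.Walk b b) (P : G.Walk b t) : Prop :=
  IsBlossom G M C ∧ P.IsPath ∧ AltList M P.edges ∧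
    (∀ e, P.edges.head? = some e → e ∈ M) ∧
    IsMatching G ((M \ P.edges.toFinset) ∪ (P.edges.filter (· ∉ M)).toFinset)

/-- A stemmed blossom is bad if `w(C∩M) + 2w(P∩M) < w(C\M) + 2w(P\M)`. -/
def BadStemmedBlossom {V : Type*} [DecidableEq V] {G : SimpleGraph V}
    (w : Sym2 V → ℝ) (M : Finset (Sym2 V)) {b t : V} (C : G.Walk b b)
    (P : G.Walk b t) : Prop :=
  wsum w (C.edges.filter (· ∈ M)) + 2 * wsum w (P.edges.filter (· ∈ M)) <
    wsum w (C.edges.filter (· ∉ M)) + 2 * wsum w (P.edges.filter (· ∉ M))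

/-- A blossom pair: two blossoms joined by an alternating path between their bases,
beginning and ending with edges of `M`. -/
def IsBlossomPair {V : Type*} [DecidableEq V] (G : SimpleGraph V)
    (M : Finset (Sym2 V)) {b₁ b₂ : V} (C₁ : G.Walk b₁ b₁) (C₂ : G.Walk b₂ b₂)
    (P : G.Walk b₁ b₂) : Prop :=
  IsBlossom G M C₁ ∧ IsBlossom G M C₂ ∧ P.IsPath ∧ AltList M P.edges ∧
    (∀ e, P.edges.head? = some e → e ∈ M) ∧
    (∀ e, P.edges.getLast? = some e → e ∈ M)

/-- A blossom pair is bad if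
`w(C₁∩M) + w(C₂∩M) + 2w(P∩M) < w(C₁\M) + w(C₂\M) + 2w(P\M)`. -/
def BadBlossomPair {V : Type*} [DecidableEq V] {G : SimpleGraph V}
    (w : Sym2 V → ℝ) (M : Finset (Sym2 V)) {b₁ b₂ : V} (C₁ : G.Walk b₁ b₁)
    (C₂ : G.Walk b₂ b₂) (P : G.Walk b₁ b₂) : Prop :=
  wsum w (C₁.edges.filter (· ∈ M)) + wsum w (C₂.edges.filter (· ∈ M)) +
      2 * wsum w (P.edges.filter (· ∈ M)) <
    wsum w (C₁.edges.filter (· ∉ M)) + wsum w (C₂.edges.filter (· ∉ M)) +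
      2 * wsum w (P.edges.filter (· ∉ M))

open SimpleGraph

section Matching
variable {V : Type*} [DecidableEq V] {G : SimpleGraph V} {M : Finset (Sym2 V)}

lemma IsMatching.card_filter_mem_le_one (hM : IsMatching G M) (x : V) :
    #(M.filter (x ∈ ·)) ≤ 1 :=
  Finset.card_le_one.mpr fun e he f hf => by
    rw [Finset.mem_filter] at he hf
    by_contra hef
    exact hM.2 e he.1 f hf.1 hef x he.2 hf.2

lemma IsMatching.countP_mem_le_one (hM : IsMatching G M) {l : List (Sym2 V)} (hl : l.Nodup)
    (hlM : ∀ e ∈ l, e ∈ M) (x : V) : l.countP (x ∈ ·) ≤ 1 := by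
  rw [List.countP_eq_length_filter, ← List.toFinset_card_of_nodup (hl.filter _)]
  refine le_trans (Finset.card_le_card fun e he => ?_) (hM.card_filter_mem_le_one x)
  simp only [List.mem_toFinset, List.mem_filter, decide_eq_true_eq] at he
  exact Finset.mem_filter.mpr ⟨hlM e he.1, he.2⟩

lemma IsMatching.mWeight_incidence_le_one (hM : IsMatching G M) (x : V) :
    mWeight (fun e => if x ∈ e then 1 else 0) M ≤ 1 := by
  rw [mWeight, Finset.sum_boole]
  exact_mod_cast hM.card_filter_mem_le_one x

lemma sum_countP_mem_eq_two_mul_length {T : Finset V} {l : List (Sym2 V)}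
    (hdiag : ∀ e ∈ l, ¬e.IsDiag) (hT : ∀ e ∈ l, ∀ x ∈ e, x ∈ T) :
    ∑ x ∈ T, l.countP (x ∈ ·) = 2 * l.length := by
  induction l with
  | nil => simp
  | cons e l ih =>
    have hfilter : T.filter (· ∈ e) = e.toFinset := by
      ext x
      simpa using fun hx => hT e List.mem_cons_self x hx
    simp only [List.countP_cons, decide_eq_true_eq, Finset.sum_add_distrib, Finset.sum_ite,
      Finset.sum_const_zero, Finset.sum_const, smul_eq_mul, mul_one, hfilter,
      Sym2.card_toFinset_of_not_isDiag e (hdiag e List.mem_cons_self), List.length_cons,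
      ih (fun f hf => hdiag f (List.mem_cons_of_mem e hf))
        (fun f hf => hT f (List.mem_cons_of_mem e hf))]
    ring

end Matching

section SwapGain
variable {V : Type*} [DecidableEq V] {M : Finset (Sym2 V)}

def swapGain (w : Sym2 V → ℝ) (M : Finset (Sym2 V)) (l : List (Sym2 V)) : ℝ :=
  wsum w (l.filter (· ∉ M)) - wsum w (l.filter (· ∈ M))

lemma swapGain_append (w : Sym2 V → ℝ) (l₁ l₂ : List (Sym2 V)) :
    swapGain w M (l₁ ++ l₂) = swapGain w M l₁ + swapGain w M l₂ := by
  simp only [swapGain, wsum, List.filter_append, List.map_append, List.sum_append]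
  ring

lemma wsum_incidence (x : V) (l : List (Sym2 V)) :
    wsum (fun e => if x ∈ e then 1 else 0) l = l.countP (x ∈ ·) := by
  induction l with
  | nil => simp [wsum]
  | cons e l ih =>
    simp only [wsum] at ih ⊢
    by_cases hx : x ∈ e <;> simp [hx, ih, add_comm]

lemma swapGain_incidence (x : V) (l : List (Sym2 V)) :
    swapGain (fun e => if x ∈ e then 1 else 0) M l =
      l.countP (x ∈ ·) - 2 * (l.filter (· ∈ M)).countP (x ∈ ·) := by
  rw [swapGain, wsum_incidence, wsum_incidence, List.countP_eq_countP_filter_add l _ (· ∈ M)]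
  simp only [decide_not, Nat.cast_add]
  ring

def alternatingShift (M : Finset (Sym2 V)) (l : List (Sym2 V)) (a : ℝ) (e : Sym2 V) : ℝ :=
  if e ∈ l then (if e ∈ M then -a else a) else 0

lemma sum_mul_alternatingShift {S : Finset (Sym2 V)} {l : List (Sym2 V)} (hl : l.Nodup)
    (hlS : ∀ e ∈ l, e ∈ S) (w : Sym2 V → ℝ) (a : ℝ) :
    ∑ e ∈ S, w e * alternatingShift M l a e = a * swapGain w M l := by
  have hS : S ∩ l.toFinset = l.toFinset :=
    Finset.inter_eq_right.mpr fun e he => hlS e (List.mem_toFinset.mp he)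
  simp only [alternatingShift, mul_ite, mul_zero, ← List.mem_toFinset]
  rw [Finset.sum_ite_mem, hS, List.sum_toFinset _ hl]
  clear hS hlS hl
  induction l with
  | nil => simp [swapGain, wsum]
  | cons e l ih =>
    by_cases he : e ∈ M <;> simp [swapGain, wsum, he] at ih ⊢ <;> linarith

end SwapGain

namespace SimpleGraph.Walk

variable {V : Type*} {G : SimpleGraph V}

lemma exists_mem_edges_start_mem {u v : V} {p : G.Walk u v} (huv : u ≠ v)
    {M : Finset (Sym2 V)} (hM : ∀ e, p.edges.head? = some e → e ∈ M) :
    ∃ e ∈ p.edges, e ∈ M ∧ u ∈ e := by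
  cases p with
  | nil => exact absurd rfl huv
  | cons h q => exact ⟨_, List.mem_cons_self, hM _ rfl, Sym2.mem_mk_left _ _⟩

lemma exists_mem_edges_end_mem {u v : V} {p : G.Walk u v} (huv : u ≠ v)
    {M : Finset (Sym2 V)} (hM : ∀ e, p.edges.getLast? = some e → e ∈ M) :
    ∃ e ∈ p.edges, e ∈ M ∧ v ∈ e := by
  obtain ⟨e, he, heM, hve⟩ := exists_mem_edges_start_mem (p := p.reverse) huv.symm
    (by simpa only [edges_reverse, List.head?_reverse] using hM)
  exact ⟨e, by simpa using he, heM, hve⟩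

lemma nodup_edges_append {u v u' v' : V} {p : G.Walk u v} {q : G.Walk u' v'}
    (hp : p.edges.Nodup) (hq : q.edges.Nodup) (hpq : ∀ x ∈ p.support, x ∉ q.support) :
    (p.edges ++ q.edges).Nodup :=
  List.nodup_append.mpr ⟨hp, hq, fun e he _ he' hee =>
    hpq _ (p.mem_support_of_mem_edges he e.out_fst_mem)
      (q.mem_support_of_mem_edges (hee ▸ he') e.out_fst_mem)⟩

variable [DecidableEq V]

lemma countP_mem_edges_add {u v : V} (p : G.Walk u v) (x : V) :
    p.edges.countP (x ∈ ·) + (if x = u then 1 else 0) + (if x = v then 1 else 0) =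
      2 * p.support.count x := by
  induction p with
  | @nil w => by_cases h : x = w <;> simp [h, Ne.symm]
  | @cons u w _ huw q ih =>
    simp only [edges_cons, support_cons, List.countP_cons, List.count_cons, Sym2.mem_iff,
      decide_eq_true_eq, beq_iff_eq]
    rcases eq_or_ne x u with rfl | hxu
    · simp [huw.ne] at ih ⊢; omega
    · simpa [hxu, Ne.symm hxu] using ih

lemma countP_mem_eq_zero_of_subset_edges {u v x : V} {p : G.Walk u v} {l : List (Sym2 V)}
    (hl : l ⊆ p.edges) (hx : x ∉ p.support) : l.countP (x ∈ ·) = 0 :=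
  List.countP_eq_zero.mpr fun _ he hxe =>
    hx (p.mem_support_of_mem_edges (hl he) (of_decide_eq_true hxe))

lemma IsCycle.countP_mem_edges {b x : V} {c : G.Walk b b} (hc : c.IsCycle)
    (hx : x ∈ c.support) : c.edges.countP (x ∈ ·) = 2 := by
  have hxt : x ∈ c.support.tail := by
    rw [← c.cons_tail_support, List.mem_cons] at hx
    exact hx.elim (· ▸ end_mem_tail_support hc.not_nil) id
  have := c.countP_mem_edges_add x
  rw [← c.cons_tail_support, List.count_cons,
    List.count_eq_one_of_mem hc.support_nodup hxt] at this
  rcases eq_or_ne x b with rfl | hxb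
  · simp at this; omega
  · simp [hxb, Ne.symm hxb] at this; omega

lemma IsPath.countP_mem_edges_add {u v x : V} {p : G.Walk u v} (hp : p.IsPath)
    (hx : x ∈ p.support) :
    p.edges.countP (x ∈ ·) + (if x = u then 1 else 0) + (if x = v then 1 else 0) = 2 := by
  rw [p.countP_mem_edges_add, List.count_eq_one_of_mem hp.support_nodup hx]

lemma exists_mem_edges_mem_of_altList {u v x : V} {p : G.Walk u v} {M : Finset (Sym2 V)}
    (hA : AltList M p.edges) (hx : x ∈ p.support) (hxu : x ≠ u) (hxv : x ≠ v) :
    ∃ e ∈ p.edges, e ∈ M ∧ x ∈ e := by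
  obtain ⟨j, hj, rfl⟩ := List.mem_iff_getElem.mp hx
  rw [support_getElem_eq_getVert] at hxu hxv ⊢
  have hj0 : j ≠ 0 := by rintro rfl; exact hxu p.getVert_zero
  have hjl : j ≠ p.length := by rintro rfl; exact hxv p.getVert_length
  obtain ⟨i, rfl⟩ := Nat.exists_eq_add_one_of_ne_zero hj0
  have hi : i + 1 < p.edges.length := by simp at hj ⊢; omega
  by_cases hM : p.edges[i + 1] ∈ M
  · exact ⟨_, List.getElem_mem hi, hM, by rw [getElem_edges]; exact Sym2.mem_mk_left _ _⟩
  · exact ⟨_, List.getElem_mem (Nat.lt_of_succ_lt hi), (hA i hi).mpr hM,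
      by rw [getElem_edges]; exact Sym2.mem_mk_right _ _⟩

variable {M : Finset (Sym2 V)}

lemma IsPath.countP_mem_matching_edges (hM : IsMatching G M) {u v x : V} {p : G.Walk u v}
    (hp : p.IsPath) (hA : AltList M p.edges) (hh : ∀ e, p.edges.head? = some e → e ∈ M)
    (hl : ∀ e, p.edges.getLast? = some e → e ∈ M) (huv : u ≠ v) (hx : x ∈ p.support) :
    (p.edges.filter (· ∈ M)).countP (x ∈ ·) = 1 := by
  refine le_antisymm (hM.countP_mem_le_one (hp.edges_nodup.filter _) (by simp) x) ?_
  obtain ⟨e, he, heM, hxe⟩ : ∃ e ∈ p.edges, e ∈ M ∧ x ∈ e := by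
    rcases eq_or_ne x u with rfl | hxu
    · exact exists_mem_edges_start_mem huv hh
    rcases eq_or_ne x v with rfl | hxv
    · exact exists_mem_edges_end_mem huv hl
    exact exists_mem_edges_mem_of_altList hA hx hxu hxv
  exact List.countP_pos_iff.mpr ⟨e, List.mem_filter.mpr ⟨he, by simpa⟩, by simpa⟩

lemma IsPath.swapGain_incidence (hM : IsMatching G M) {u v : V} {p : G.Walk u v}
    (hp : p.IsPath) (hA : AltList M p.edges) (hh : ∀ e, p.edges.head? = some e → e ∈ M)
    (hl : ∀ e, p.edges.getLast? = some e → e ∈ M) (huv : u ≠ v) (x : V) :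
    swapGain (fun e => if x ∈ e then 1 else 0) M p.edges =
      -((if x = u then 1 else 0) + (if x = v then 1 else 0)) := by
  rw [_root_.swapGain_incidence]
  by_cases hx : x ∈ p.support
  · have hdeg : (p.edges.countP (x ∈ ·) : ℝ) + (if x = u then 1 else 0) +
        (if x = v then 1 else 0) = 2 := by
      exact_mod_cast hp.countP_mem_edges_add hx
    rw [hp.countP_mem_matching_edges hM hA hh hl huv hx]
    push_cast
    linarith
  · have hxu : x ≠ u := fun h => hx (h ▸ p.start_mem_support)
    have hxv : x ≠ v := fun h => hx (h ▸ p.end_mem_support)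
    rw [countP_mem_eq_zero_of_subset_edges (List.Subset.refl _) hx,
      countP_mem_eq_zero_of_subset_edges (List.filter_subset_self _) hx]
    simp [hxu, hxv]

end SimpleGraph.Walk

section Blossom
variable {V : Type*} [DecidableEq V] {G : SimpleGraph V} {M : Finset (Sym2 V)}

lemma IsBlossom.countP_mem_matching_edges (hM : IsMatching G M) {b x : V} {c : G.Walk b b}
    (hc : IsBlossom G M c) (hx : x ∈ c.support) (hxb : x ≠ b) :
    (c.edges.filter (· ∈ M)).countP (x ∈ ·) = 1 := by
  obtain ⟨hcyc, -, hlen, hbase⟩ := hc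
  set l := c.edges.filter (· ∈ M)
  set T := c.support.tail.toFinset.erase b
  have hmemT : ∀ y ∈ c.support, y ≠ b → y ∈ T := fun y hy hyb =>
    Finset.mem_erase.mpr ⟨hyb, List.mem_toFinset.mpr
      ((List.mem_cons.mp (c.cons_tail_support ▸ hy)).resolve_left hyb)⟩
  have hl : ∀ e ∈ l, e ∈ c.edges ∧ e ∈ M := by simp [l]
  have hT : #T = 2 * l.length := by
    rw [Finset.card_erase_of_mem (List.mem_toFinset.mpr (Walk.end_mem_tail_support hcyc.not_nil)),
      List.toFinset_card_of_nodup hcyc.support_nodup, List.length_tail, Walk.length_support]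
    omega
  -- the `2k` vertices of `C - b` are covered by the `k` pairwise disjoint edges of `C ∩ M`
  have hsum : ∑ y ∈ T, l.countP (y ∈ ·) = ∑ _y ∈ T, 1 := by
    rw [sum_countP_mem_eq_two_mul_length
      (fun e he => G.not_isDiag_of_mem_edgeSet (c.edges_subset_edgeSet (hl e he).1))
      (fun e he y hy => hmemT y (c.mem_support_of_mem_edges (hl e he).1 hy)
        (fun hyb => hbase e (hl e he).1 (hl e he).2 (hyb ▸ hy))),
      Finset.sum_const, hT, smul_eq_mul, mul_one]
  exact (Finset.sum_eq_sum_iff_of_le fun y _ => hM.countP_mem_le_one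
    (hcyc.edges_nodup.filter _) (fun e he => (hl e he).2) y).mp hsum x (hmemT x hx hxb)

lemma IsBlossom.swapGain_incidence (hM : IsMatching G M) {b : V} {c : G.Walk b b}
    (hc : IsBlossom G M c) (x : V) :
    swapGain (fun e => if x ∈ e then 1 else 0) M c.edges = 2 * (if x = b then 1 else 0) := by
  rw [_root_.swapGain_incidence]
  by_cases hx : x ∈ c.support
  · rw [hc.1.countP_mem_edges hx]
    rcases eq_or_ne x b with rfl | hxb
    · rw [List.countP_eq_zero.mpr fun e he hxe => by
        simp only [List.mem_filter, decide_eq_true_eq] at he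
        exact hc.2.2.2 e he.1 he.2 (of_decide_eq_true hxe)]
      norm_num
    · rw [hc.countP_mem_matching_edges hM hx hxb]
      simp [hxb]
  · have hxb : x ≠ b := fun h => hx (h ▸ c.start_mem_support)
    rw [Walk.countP_mem_eq_zero_of_subset_edges (List.Subset.refl _) hx,
      Walk.countP_mem_eq_zero_of_subset_edges (List.filter_subset_self _) hx]
    simp [hxb]

end Blossom

section MatchingLP
variable {V : Type*} [Fintype V] [DecidableEq V] {G : SimpleGraph V} [DecidableRel G.Adj]
  {M : Finset (Sym2 V)}

lemma LPval_indicator (hMG : (↑M : Set (Sym2 V)) ⊆ G.edgeSet) (w : Sym2 V → ℝ) :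
    LPval G w (fun e => if e ∈ M then 1 else 0) = mWeight w M := by
  simp only [LPval, mWeight, mul_ite, mul_one, mul_zero]
  rw [Finset.sum_ite_mem, Finset.inter_eq_right.mpr fun e he => by simpa using hMG he]

lemma LPval_perturbation (hMG : (↑M : Set (Sym2 V)) ⊆ G.edgeSet) {L P : List (Sym2 V)}
    (hL : L.Nodup) (hLG : ∀ e ∈ L, e ∈ G.edgeSet) (hP : P.Nodup) (hPG : ∀ e ∈ P, e ∈ G.edgeSet)
    (w : Sym2 V → ℝ) (a b : ℝ) :
    LPval G w (fun e => (if e ∈ M then 1 else 0) + alternatingShift M L a e +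
        alternatingShift M P b e) =
      mWeight w M + a * swapGain w M L + b * swapGain w M P := by
  simp only [LPval, mul_add, Finset.sum_add_distrib]
  rw [← LPval, LPval_indicator hMG,
    sum_mul_alternatingShift hL (fun e he => by simpa using hLG e he),
    sum_mul_alternatingShift hP (fun e he => by simpa using hPG e he)]

lemma sum_incidence_eq_LPval (x : V) (y : Sym2 V → ℝ) :
    ∑ e ∈ G.edgeFinset.filter (x ∈ ·), y e = LPval G (fun e => if x ∈ e then 1 else 0) y := by
  simp [LPval, Finset.sum_filter]

lemma lpFeasible_perturbation (hM : IsMatching G M) {L P : List (Sym2 V)}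
    (hL : L.Nodup) (hLG : ∀ e ∈ L, e ∈ G.edgeSet) (hP : P.Nodup) (hPG : ∀ e ∈ P, e ∈ G.edgeSet)
    {a b : ℝ} (ha : 0 ≤ a) (hb : 0 ≤ b) (hab : a + b ≤ 1)
    (hbal : ∀ x, a * swapGain (fun e => if x ∈ e then 1 else 0) M L +
      b * swapGain (fun e => if x ∈ e then 1 else 0) M P = 0) :
    LPFeasible G (fun e => (if e ∈ M then 1 else 0) + alternatingShift M L a e +
      alternatingShift M P b e) := by
  refine ⟨fun e => ?_, fun e he => ?_, fun x => ?_⟩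
  · dsimp only [alternatingShift]
    split_ifs <;> linarith
  · have hM' : e ∉ M := fun h => he (hM.1 h)
    have hL' : e ∉ L := fun h => he (hLG e h)
    have hP' : e ∉ P := fun h => he (hPG e h)
    simp [alternatingShift, hM', hL', hP']
  · rw [sum_incidence_eq_LPval, LPval_perturbation hM.1 hL hLG hP hPG]
    linarith [hM.mWeight_incidence_le_one x, hbal x]

end MatchingLP

theorem bad_blossom_pair_perturbation_general {V : Type*} [Fintype V] [DecidableEq V]
    (G : SimpleGraph V) [DecidableRel G.Adj] (w : Sym2 V → ℝ)
    (M : Finset (Sym2 V)) (hM : IsMatching G M)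
    {b₁ b₂ : V} (C₁ : G.Walk b₁ b₁) (C₂ : G.Walk b₂ b₂) (P : G.Walk b₁ b₂)
    (hBP : IsBlossomPair G M C₁ C₂ P) (hbad : BadBlossomPair w M C₁ C₂ P)
    (hdisj : ∀ v : V, v ∈ C₁.support → v ∉ C₂.support) :
    ∃ ε : ℝ, 0 < ε ∧
      LPFeasible G (fun e =>
        (if e ∈ M then (1 : ℝ) else 0) +
        (if e ∈ C₁.edges ∨ e ∈ C₂.edges then (if e ∈ M then -ε else ε) else 0) +
        (if e ∈ P.edges then (if e ∈ M then -(2 * ε) else 2 * ε) else 0)) ∧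
      LPval G w (fun e => if e ∈ M then (1 : ℝ) else 0) <
        LPval G w (fun e =>
          (if e ∈ M then (1 : ℝ) else 0) +
          (if e ∈ C₁.edges ∨ e ∈ C₂.edges then (if e ∈ M then -ε else ε) else 0) +
          (if e ∈ P.edges then (if e ∈ M then -(2 * ε) else 2 * ε) else 0)) := by
  obtain ⟨hB₁, hB₂, hP, hA, hhead, hlast⟩ := hBP
  have hb : b₁ ≠ b₂ := fun h => hdisj b₁ C₁.start_mem_support (h ▸ C₂.start_mem_support)
  have hC := Walk.nodup_edges_append hB₁.1.edges_nodup hB₂.1.edges_nodup hdisj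
  have hCG : ∀ e ∈ C₁.edges ++ C₂.edges, e ∈ G.edgeSet := fun e he =>
    (List.mem_append.mp he).elim (C₁.edges_subset_edgeSet ·) (C₂.edges_subset_edgeSet ·)
  have hPG : ∀ e ∈ P.edges, e ∈ G.edgeSet := fun e he => P.edges_subset_edgeSet he
  have hgain : 0 < swapGain w M C₁.edges + swapGain w M C₂.edges + 2 * swapGain w M P.edges := by
    unfold BadBlossomPair at hbad
    unfold swapGain
    linarith
  refine ⟨1 / 3, by norm_num, ?_⟩
  have hshift : ∀ a e, (if e ∈ C₁.edges ∨ e ∈ C₂.edges then (if e ∈ M then -a else a) else 0) =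
      alternatingShift M (C₁.edges ++ C₂.edges) a e := by
    simp [alternatingShift]
  simp only [hshift, show ∀ a e, (if e ∈ P.edges then (if e ∈ M then -a else a) else 0) =
    alternatingShift M P.edges a e from fun _ _ => rfl]
  refine ⟨lpFeasible_perturbation hM hC hCG hP.edges_nodup hPG (by norm_num) (by norm_num)
    (by norm_num) fun x => ?_, ?_⟩
  · rw [swapGain_append, hB₁.swapGain_incidence hM, hB₂.swapGain_incidence hM,
      hP.swapGain_incidence hM hA hhead hlast hb]
    ring
  · rw [LPval_indicator hM.1, LPval_perturbation hM.1 hC hCG hP.edges_nodup hPG, swapGain_append]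
    linarith

/-- Let `(C₁, C₂, P)` be a bad blossom pair with respect to a
matching `M` (the two blossoms, the connecting alternating path `P` between the bases
and `M` pairwise overlapping only as prescribed).  Then `M` is not a maximum weight
fractional matching: for small `ε > 0`, the point obtained from the indicator vector
of `M` by adding `ε` on `(C₁ ∪ C₂) \ M`, subtracting `ε` on `(C₁ ∪ C₂) ∩ M`, adding
`2ε` on `P \ M` and subtracting `2ε` on `P ∩ M` is feasible for the matching LP and
has strictly larger objective value than the indicator vector of `M`. -/
theorem bad_blossom_pair_perturbation {V : Type*} [Fintype V] [DecidableEq V]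
    (G : SimpleGraph V) [DecidableRel G.Adj] (w : Sym2 V → ℝ)
    (M : Finset (Sym2 V)) (hM : IsMatching G M)
    {b₁ b₂ : V} (C₁ : G.Walk b₁ b₁) (C₂ : G.Walk b₂ b₂) (P : G.Walk b₁ b₂)
    (hBP : IsBlossomPair G M C₁ C₂ P) (hbad : BadBlossomPair w M C₁ C₂ P)
    (hdisj : ∀ v : V, v ∈ C₁.support → v ∉ C₂.support)
    (hPC₁ : ∀ v ∈ P.support, v ∈ C₁.support → v = b₁)
    (hPC₂ : ∀ v ∈ P.support, v ∈ C₂.support → v = b₂) :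
    ∃ ε : ℝ, 0 < ε ∧
      LPFeasible G (fun e =>
        (if e ∈ M then (1 : ℝ) else 0) +
        (if e ∈ C₁.edges ∨ e ∈ C₂.edges then (if e ∈ M then -ε else ε) else 0) +
        (if e ∈ P.edges then (if e ∈ M then -(2 * ε) else 2 * ε) else 0)) ∧
      LPval G w (fun e => if e ∈ M then (1 : ℝ) else 0) <
        LPval G w (fun e =>
          (if e ∈ M then (1 : ℝ) else 0) +
          (if e ∈ C₁.edges ∨ e ∈ C₂.edges then (if e ∈ M then -ε else ε) else 0) +
          (if e ∈ P.edges then (if e ∈ M then -(2 * ε) else 2 * ε) else 0)) :=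
  bad_blossom_pair_perturbation_general G w M hM C₁ C₂ P hBP hbad hdisj
end
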